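/- For any categorical distribution θ on a finite nonempty set X and any α₀ ∈ ℝ, the function α ↦ H(T(θ,α)) is differentiable at α₀ with derivative −α₀·V(T(θ,α₀)||θ). -/

import Mathlib

open Real BigOperators
open scoped Classical

variable {X : Type*}

/-- A categorical distribution on a finite set: positive everywhere and sums to 1. -/
def IsCatDist [Fintype X] (θ : X → ℝ) : Prop :=
  (∀ x, 0 < θ x) ∧ ∑ x, θ x = 1

/-- The tilt of order `α` of a categorical distribution. -/
noncomputable def tilt [Fintype X] (θ : X → ℝ) (α : ℝ) : X → ℝ :=
  fun x => θ x ^ α / ∑ y, θ y ^ α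

/-- Shannon entropy (natural log). -/
noncomputable def shannonEntropy [Fintype X] (ρ : X → ℝ) : ℝ :=
  ∑ x, ρ x * Real.log (1 / ρ x)

/-- Cross entropy `H(ρ‖θ)`. -/
noncomputable def crossEntropy [Fintype X] (ρ θ : X → ℝ) : ℝ :=
  ∑ x, ρ x * Real.log (1 / θ x)

/-- Relative entropy (KL divergence) `D(ρ‖θ)`. -/
noncomputable def relEntropy [Fintype X] (ρ θ : X → ℝ) : ℝ :=
  ∑ x, ρ x * Real.log (ρ x / θ x)

/-- Rényi entropy of order `α`. -/
noncomputable def renyiEntropy [Fintype X] (θ : X → ℝ) (α : ℝ) : ℝ :=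
  (1 / (1 - α)) * Real.log (∑ x, θ x ^ α)

/-- Varentropy. -/
noncomputable def varentropy [Fintype X] (ρ : X → ℝ) : ℝ :=
  ∑ x, ρ x * (Real.log (1 / ρ x) - shannonEntropy ρ) ^ 2

/-- Cross varentropy. -/
noncomputable def crossVarentropy [Fintype X] (ρ θ : X → ℝ) : ℝ :=
  ∑ x, ρ x * (Real.log (1 / θ x) - crossEntropy ρ θ) ^ 2

/-- Probability of an `n`-string under the i.i.d. extension of `θ`. -/
noncomputable def strProb (θ : X → ℝ) {n : ℕ} (x : Fin n → X) : ℝ := ∏ i, θ (x i)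

/-- Probability of a set of `n`-strings. -/
noncomputable def setProb [Fintype X] (θ : X → ℝ) {n : ℕ} (S : Finset (Fin n → X)) : ℝ :=
  ∑ x ∈ S, strProb θ x

/-- `θ` has a unique maximizer and a unique minimizer. -/
def UniqueExtremizers [Fintype X] (θ : X → ℝ) : Prop :=
  (∃! x : X, ∀ y, θ y ≤ θ x) ∧ (∃! x : X, ∀ y, θ x ≤ θ y)

/-- Tilted weakly typical set of order `α`. -/
noncomputable def typicalSetA [Fintype X] (θ : X → ℝ) (α : ℝ) (n : ℕ) (ε : ℝ) :
    Finset (Fin n → X) :=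
  Finset.univ.filter (fun x =>
    Real.exp (-(n : ℝ) * crossEntropy (tilt θ α) θ - n * ε) < strProb θ x ∧
    strProb θ x < Real.exp (-(n : ℝ) * crossEntropy (tilt θ α) θ + n * ε))

/-- The set `D^n_{θ,α,ε}`. -/
noncomputable def setD [Fintype X] (θ : X → ℝ) (α : ℝ) (n : ℕ) (ε : ℝ) :
    Finset (Fin n → X) :=
  Finset.univ.filter (fun x =>
    strProb (tilt θ α) x > Real.exp (-(n : ℝ) * shannonEntropy (tilt θ α) - n * |α| * ε))

/-- The set `E^n_{θ,α,ε}`. -/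
noncomputable def setE [Fintype X] (θ : X → ℝ) (α : ℝ) (n : ℕ) (ε : ℝ) :
    Finset (Fin n → X) :=
  Finset.univ.filter (fun x =>
    strProb (tilt θ α) x < Real.exp (-(n : ℝ) * shannonEntropy (tilt θ α) + n * |α| * ε))

/-- A guesswork function for `θ` on `n`-strings: a bijection onto `{1,…,|X|^n}`
that orders strings from most likely to least likely. -/
def IsGuesswork [Fintype X] (θ : X → ℝ) {n : ℕ} (G : (Fin n → X) → ℕ) : Prop :=
  Function.Injective G ∧
  (∀ x, G x ∈ Finset.Icc 1 (Fintype.card X ^ n)) ∧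
  (∀ m ∈ Finset.Icc 1 (Fintype.card X ^ n), ∃ x, G x = m) ∧
  (∀ x y, strProb θ x > strProb θ y → G x < G y)

/-!
Writing `Z α = ∑ x, θ x ^ α`, one has `log (1 / T(θ,α) x) = log (Z α) + α * log (1 / θ x)`, hence
`H(T(θ,α)) = log (Z α) + α * H(T(θ,α)‖θ)`. The tilts form an exponential family with statistic
`log (1 / θ)`: the derivative of `log Z` is minus its tilted mean `H(T(θ,α)‖θ)`, and the derivative
of that mean is minus its tilted variance `V(T(θ,α)‖θ)`. In the derivative of `H(T(θ,α))` the two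
first-order terms cancel, leaving `-α * V(T(θ,α)‖θ)`.
-/

section TiltCalculus

variable [Fintype X] {θ : X → ℝ}

lemma sum_rpow_pos [Nonempty X] (hθ : ∀ x, 0 < θ x) (α : ℝ) : 0 < ∑ x, θ x ^ α :=
  Finset.sum_pos (fun x _ => rpow_pos_of_pos (hθ x) α) Finset.univ_nonempty

lemma sum_tilt_mul (α : ℝ) (f : X → ℝ) :
    ∑ x, tilt θ α x * f x = (∑ x, θ x ^ α * f x) / ∑ x, θ x ^ α := by
  simp only [tilt, Finset.sum_div, div_mul_eq_mul_div]

lemma sum_tilt [Nonempty X] (hθ : ∀ x, 0 < θ x) (α : ℝ) : ∑ x, tilt θ α x = 1 := by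
  simpa [tilt, ← Finset.sum_div] using (sum_rpow_pos hθ α).ne'

lemma crossVarentropy_eq_sub_sq {ρ : X → ℝ} (hρ : ∑ x, ρ x = 1) :
    crossVarentropy ρ θ = ∑ x, ρ x * log (1 / θ x) ^ 2 - crossEntropy ρ θ ^ 2 := by
  set c := crossEntropy ρ θ with hc
  have hexpand : ∀ x, ρ x * (log (1 / θ x) - c) ^ 2
      = ρ x * log (1 / θ x) ^ 2 - 2 * c * (ρ x * log (1 / θ x)) + c ^ 2 * ρ x := fun x => by ring
  simp only [crossVarentropy, ← hc, hexpand, Finset.sum_add_distrib, Finset.sum_sub_distrib,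
    ← Finset.mul_sum, hρ]
  rw [hc, crossEntropy]
  ring

lemma shannonEntropy_tilt [Nonempty X] (hθ : ∀ x, 0 < θ x) (α : ℝ) :
    shannonEntropy (tilt θ α) = log (∑ x, θ x ^ α) + α * crossEntropy (tilt θ α) θ := by
  have hlog : ∀ x, log (1 / tilt θ α x) = log (∑ x, θ x ^ α) + α * log (1 / θ x) := by
    intro x
    rw [tilt, one_div_div, log_div (sum_rpow_pos hθ α).ne' (rpow_pos_of_pos (hθ x) α).ne',
      log_rpow (hθ x), one_div, log_inv]
    ring
  simp only [shannonEntropy, crossEntropy, hlog, mul_add, Finset.sum_add_distrib,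
    ← Finset.sum_mul, sum_tilt hθ, one_mul, Finset.mul_sum, mul_left_comm α]

lemma hasDerivAt_sum_rpow_mul (hθ : ∀ x, 0 < θ x) (f : X → ℝ) (α : ℝ) :
    HasDerivAt (fun a => ∑ x, θ x ^ a * f x) (∑ x, θ x ^ α * log (θ x) * f x) α :=
  HasDerivAt.fun_sum fun x _ => (hasStrictDerivAt_const_rpow (hθ x) α).hasDerivAt.mul_const _

lemma hasDerivAt_sum_rpow (hθ : ∀ x, 0 < θ x) (α : ℝ) :
    HasDerivAt (fun a => ∑ x, θ x ^ a) (∑ x, θ x ^ α * log (θ x)) α := by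
  simpa using hasDerivAt_sum_rpow_mul hθ (fun _ => 1) α

lemma hasDerivAt_log_sum_rpow [Nonempty X] (hθ : ∀ x, 0 < θ x) (α : ℝ) :
    HasDerivAt (fun a => log (∑ x, θ x ^ a)) (-crossEntropy (tilt θ α) θ) α := by
  refine ((hasDerivAt_sum_rpow hθ α).log (sum_rpow_pos hθ α).ne').congr_deriv ?_
  rw [crossEntropy, sum_tilt_mul]
  simp [one_div, log_inv, neg_div]

lemma hasDerivAt_sum_tilt_mul [Nonempty X] (hθ : ∀ x, 0 < θ x) (f : X → ℝ) (α : ℝ) :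
    HasDerivAt (fun a => ∑ x, tilt θ a x * f x)
      (crossEntropy (tilt θ α) θ * ∑ x, tilt θ α x * f x
        - ∑ x, tilt θ α x * (log (1 / θ x) * f x)) α := by
  have hZ := (sum_rpow_pos hθ α).ne'
  simp only [crossEntropy, sum_tilt_mul]
  refine ((hasDerivAt_sum_rpow_mul hθ f α).fun_div (hasDerivAt_sum_rpow hθ α) hZ).congr_deriv ?_
  simp only [one_div, log_inv, neg_mul, mul_neg, Finset.sum_neg_distrib, ← mul_assoc]
  field_simp
  ring

lemma hasDerivAt_crossEntropy_tilt [Nonempty X] (hθ : ∀ x, 0 < θ x) (α : ℝ) :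
    HasDerivAt (fun a => crossEntropy (tilt θ a) θ) (-crossVarentropy (tilt θ α) θ) α := by
  refine (hasDerivAt_sum_tilt_mul hθ (fun x => log (1 / θ x)) α).congr_deriv ?_
  rw [crossVarentropy_eq_sub_sq (sum_tilt hθ α)]
  simp only [← sq, crossEntropy]
  ring

end TiltCalculus

theorem hasDerivAt_shannonEntropy_tilt [Fintype X] [Nonempty X] (θ : X → ℝ)
    (hθ : IsCatDist θ) (α₀ : ℝ) :
    HasDerivAt (fun α : ℝ => shannonEntropy (tilt θ α))
      (-α₀ * crossVarentropy (tilt θ α₀) θ) α₀ := by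
  obtain ⟨hpos, -⟩ := hθ
  have h := (hasDerivAt_log_sum_rpow hpos α₀).fun_add
    ((hasDerivAt_id' α₀).fun_mul (hasDerivAt_crossEntropy_tilt hpos α₀))
  simp only [shannonEntropy_tilt hpos]
  exact h.congr_deriv (by ring)
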